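/- Let n be a Nijenhuis operator on a Lie algebra (g,[·,·]). Define ad^{n^i}_ξ(ζ) = [ξ,ζ]_{n^i} where [·,·]_{n^i} is the bracket deformed by n^i. Then the recurrence ad^{n^i}_ξ = [ad^{n^{i−1}}_ξ, n] + ad^{n^{i−1}}_{nξ} holds, where [A,B] = A∘B − B∘A; equivalently, ad^{n^i}_ξ = [ad^n_ξ, n^{i−1}] + ad^n_{n^{i−1}ξ}. -/

import Mathlib

/-!
Write `D_A` for the bracket deformed by `A` and `N_{A,B}` for the polarized Nijenhuis torsion,
which is symmetric in `A` and `B`. Every pair of commuting operators satisfies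
`D_A(x, By) - B D_A(x, y) + D_A(Bx, y) = D_{BA}(x, y) + N_{A,B}(x, y)`.
For a Nijenhuis operator `n`, this identity with `(A, B) = (n, n^j)` gives
`N_{n,n^(j+1)} = n ∘ N_{n,n^j}`, so `N_{n,n^j} = 0` for all `j`; the two recurrences are then the
identity for `(A, B) = (n^j, n)` and `(n, n^j)`.
-/

namespace LieRing

variable {R L : Type*} [Semiring R] [LieRing L] [Module R L]

def deformedBracket (A : Module.End R L) (x y : L) : L :=
  ⁅A x, y⁆ + ⁅x, A y⁆ - A ⁅x, y⁆

def IsNijenhuis (A : Module.End R L) : Prop :=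
  ∀ x y, ⁅A x, A y⁆ = A (deformedBracket A x y)

/-- The polarization of the Nijenhuis torsion: `T_{A+B} = T_A + T_B + nijenhuisConcomitant A B`. -/
def nijenhuisConcomitant (A B : Module.End R L) (x y : L) : L :=
  ⁅A x, B y⁆ + ⁅B x, A y⁆ - A (deformedBracket B x y) - B (deformedBracket A x y)

lemma nijenhuisConcomitant_comm (A B : Module.End R L) (x y : L) :
    nijenhuisConcomitant A B x y = nijenhuisConcomitant B A x y := by
  unfold nijenhuisConcomitant
  abel

lemma deformedBracket_one (x y : L) : deformedBracket (1 : Module.End R L) x y = ⁅x, y⁆ := by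
  simp [deformedBracket]

lemma nijenhuisConcomitant_one (A : Module.End R L) (x y : L) :
    nijenhuisConcomitant A 1 x y = 0 := by
  rw [nijenhuisConcomitant, deformedBracket_one]
  simp only [deformedBracket, Module.End.one_apply]
  abel

lemma deformedBracket_mul_of_commute {A B : Module.End R L} (hAB : Commute A B) (x y : L) :
    deformedBracket A x (B y) - B (deformedBracket A x y) + deformedBracket A (B x) y
      = deformedBracket (B * A) x y + nijenhuisConcomitant A B x y := by
  have hBA : ∀ z, B (A z) = A (B z) := fun z => LinearMap.congr_fun hAB.symm z
  simp only [deformedBracket, nijenhuisConcomitant, Module.End.mul_apply, map_add, map_sub, hBA]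
  abel

lemma IsNijenhuis.nijenhuisConcomitant_pow_succ {A : Module.End R L} (hA : IsNijenhuis A)
    (j : ℕ) (x y : L) :
    nijenhuisConcomitant A (A ^ (j + 1)) x y = A (nijenhuisConcomitant A (A ^ j) x y) := by
  have hs : ∀ z, (A ^ (j + 1)) z = A ((A ^ j) z) := fun z => by
    rw [pow_succ', Module.End.mul_apply]
  have hidentity := deformedBracket_mul_of_commute (Commute.self_pow A j) x y
  rw [← pow_succ] at hidentity
  calc nijenhuisConcomitant A (A ^ (j + 1)) x y
      = A (deformedBracket A x ((A ^ j) y)) + A (deformedBracket A ((A ^ j) x) y)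
          - A (deformedBracket (A ^ (j + 1)) x y) - A ((A ^ j) (deformedBracket A x y)) := by
        simp only [nijenhuisConcomitant, hs, hA x, hA ((A ^ j) x)]
    _ = A (deformedBracket A x ((A ^ j) y) - (A ^ j) (deformedBracket A x y)
          + deformedBracket A ((A ^ j) x) y - deformedBracket (A ^ (j + 1)) x y) := by
        simp only [map_add, map_sub]
        abel
    _ = A (nijenhuisConcomitant A (A ^ j) x y) := by
        rw [hidentity, add_sub_cancel_left]

lemma IsNijenhuis.nijenhuisConcomitant_pow {A : Module.End R L} (hA : IsNijenhuis A)
    (j : ℕ) (x y : L) : nijenhuisConcomitant A (A ^ j) x y = 0 := by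
  induction j generalizing x y with
  | zero => exact nijenhuisConcomitant_one A x y
  | succ j ih => rw [hA.nijenhuisConcomitant_pow_succ, ih, map_zero]

end LieRing

open LieRing in
/-- Recurrence for the adjoint representations of the iterated deformed
brackets: `ad^{n^i}_ξ = [ad^{n^{i−1}}_ξ, n] + ad^{n^{i−1}}_{nξ}`, and
equivalently `ad^{n^i}_ξ = [ad^n_ξ, n^{i−1}] + ad^n_{n^{i−1}ξ}`. -/
theorem ad_pow_recurrence
    {g : Type*} [LieRing g] [LieAlgebra ℝ g]
    (n : Module.End ℝ g)
    (hN : ∀ x y, n (⁅n x, y⁆ + ⁅x, n y⁆ - n ⁅x, y⁆) = ⁅n x, n y⁆)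
    (br : ℕ → g → g → g)
    (hbr : ∀ j x y, br j x y = ⁅(n ^ j) x, y⁆ + ⁅x, (n ^ j) y⁆ - (n ^ j) ⁅x, y⁆) :
    ∀ i : ℕ, 1 ≤ i → ∀ ξ ζ : g,
      (br i ξ ζ = br (i - 1) ξ (n ζ) - n (br (i - 1) ξ ζ) + br (i - 1) (n ξ) ζ)
      ∧ (br i ξ ζ
          = br 1 ξ ((n ^ (i - 1)) ζ) - (n ^ (i - 1)) (br 1 ξ ζ)
            + br 1 ((n ^ (i - 1)) ξ) ζ) := by
  intro i hi ξ ζ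
  obtain ⟨j, rfl⟩ : ∃ j, i = j + 1 := ⟨i - 1, (Nat.succ_pred_eq_of_pos hi).symm⟩
  have hn : IsNijenhuis n := fun x y => (hN x y).symm
  obtain rfl : br = fun j => deformedBracket (n ^ j) := by
    ext j x y
    exact hbr j x y
  simp only [Nat.add_sub_cancel, pow_one]
  constructor
  · rw [deformedBracket_mul_of_commute (Commute.pow_self n j), ← pow_succ',
      nijenhuisConcomitant_comm, hn.nijenhuisConcomitant_pow, add_zero]
  · rw [deformedBracket_mul_of_commute (Commute.self_pow n j), ← pow_succ,
      hn.nijenhuisConcomitant_pow, add_zero]
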